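/- arXiv:2501.16944 — 6 statements merged into one kernel-verified Lean document; each statement's English description precedes it below -/
import Mathlib

section
/- (Node Game Invariance) Let G be a simple graph on a finite vertex set V, let M_0, M_1, ..., M_ℓ be types, and for each k = 1, ..., ℓ let Φ_k : (V → M_{k-1}) → (V → M_k) be 1-local with respect to G; set Φ := Φ_ℓ ∘ ⋯ ∘ Φ_1. Fix node features x : V → M_0, a baseline b ∈ M_0, and a vertex i ∈ V, and define the node game ν_i on subsets of V by ν_i(T) := Φ(X^{(T)})(i). Then ν_i(T) = ν_i(T ∩ B_ℓ(i)) for every subset T ⊆ V. -/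
open Classical

/-- The `r`-hop neighborhood of vertex `i` in `G`: all vertices reachable from `i`
by a walk of length at most `r`. -/
def hopBall {V : Type*} (G : SimpleGraph V) (r : ℕ) (i : V) : Set V :=
  {j | ∃ w : G.Walk i j, w.length ≤ r}

/-- `Φ : (V → α) → (V → β)` is `r`-local with respect to `G` if for every vertex `i`,
the output at `i` only depends on the input values on the `r`-hop neighborhood of `i`. -/
def IsLocalMap {V α β : Type*} (G : SimpleGraph V) (r : ℕ)
    (Φ : (V → α) → (V → β)) : Prop :=
  ∀ (i : V) (X X' : V → α), (∀ j ∈ hopBall G r i, X j = X' j) → Φ X i = Φ X' i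

/-- The masked input `X^{(T)}`: keep `x j` for `j ∈ T` and impute the baseline `b` otherwise. -/
noncomputable def maskedInput {V M : Type*} (x : V → M) (b : M) (T : Set V) : V → M :=
  fun j => if j ∈ T then x j else b

/-- The composition `Φ_ℓ ∘ ⋯ ∘ Φ_1` of the layers. -/
def layerComp {V : Type*} (M : ℕ → Type*)
    (Φ : ∀ k, (V → M k) → (V → M (k + 1))) : ∀ ℓ, (V → M 0) → (V → M ℓ)
  | 0 => id
  | (ℓ + 1) => fun X => Φ ℓ (layerComp M Φ ℓ X)

lemma layerComp_local {V : Type*} (G : SimpleGraph V)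
    (M : ℕ → Type*) (Φ : ∀ k, (V → M k) → (V → M (k + 1))) (ℓ : ℕ)
    (hloc : ∀ k < ℓ, IsLocalMap G 1 (Φ k)) :
    ∀ (i : V) (X X' : V → M 0), (∀ j ∈ hopBall G ℓ i, X j = X' j) →
      layerComp M Φ ℓ X i = layerComp M Φ ℓ X' i := by
  induction ℓ with
  | zero =>
    intro i X X' h
    exact h i ⟨SimpleGraph.Walk.nil, le_refl _⟩
  | succ n ih =>
    intro i X X' h
    simp only [layerComp]
    refine hloc n (Nat.lt_succ_self n) i _ _ ?_
    intro j hj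
    obtain ⟨w, hw⟩ := hj
    refine ih (fun k hk => hloc k (hk.trans (Nat.lt_succ_self n))) j X X' ?_
    intro m hm
    obtain ⟨w', hw'⟩ := hm
    exact h m ⟨w.append w', by simp [SimpleGraph.Walk.length_append]; omega⟩

/-- **Node Game Invariance.** For an `ℓ`-layer network whose layers are each `1`-local
w.r.t. a graph `G` on a finite vertex set, the node game
`ν_i(T) := (Φ_ℓ ∘ ⋯ ∘ Φ_1)(X^{(T)})(i)` satisfies `ν_i(T) = ν_i(T ∩ B_ℓ(i))`. -/
theorem node_game_invariance {V : Type*} [Fintype V] (G : SimpleGraph V)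
    (M : ℕ → Type*) (Φ : ∀ k, (V → M k) → (V → M (k + 1))) (ℓ : ℕ)
    (hloc : ∀ k < ℓ, IsLocalMap G 1 (Φ k))
    (x : V → M 0) (b : M 0) (i : V) (T : Set V) :
    layerComp M Φ ℓ (maskedInput x b T) i =
      layerComp M Φ ℓ (maskedInput x b (T ∩ hopBall G ℓ i)) i := by
  refine layerComp_local G M Φ ℓ hloc i _ _ ?_
  intro j hj
  simp only [maskedInput, Set.mem_inter_iff]
  by_cases hT : j ∈ T <;> simp [hT, hj]
end

section
/- (Exactness of L-Shapley under invariance) Let N be a finite set with |N| = n, let A ⊆ N be nonempty, let ν be a real-valued game on N that is A-invariant, and let i ∈ A. Then the Shapley value of i equals the sum restricted to subsets of A: φ^{SV}(i) = Σ_{T ⊆ A, i ∈ T} 1/(|A| · C(|A|−1, |T|−1)) · (ν(T) − ν(T \ {i})). In particular, the L-Shapley computation restricted to A yields the exact Shapley value. -/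
open Finset

private lemma key_beta (n k : ℕ) (hn : 1 ≤ n) (hk : k + 1 ≤ n) :
    (1:ℝ) / (((n:ℝ)+1) * (n.choose k : ℝ)) + 1 / (((n:ℝ)+1) * (n.choose (k+1) : ℝ)) =
    1 / ((n:ℝ) * ((n-1).choose k : ℝ)) := by
  obtain ⟨p, rfl⟩ : ∃ p, n = p + 1 := ⟨n - 1, by omega⟩
  have h1 : (p+1+1) * (p+1).choose k = (p+2).choose (k+1) * (k+1) := Nat.add_one_mul_choose_eq (p+1) k
  have h2 : (p+1) * (p+1-1).choose k = (p+1).choose (k+1) * (k+1) := by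
    simpa using Nat.add_one_mul_choose_eq p k
  have hp : (p+1).choose k + (p+1).choose (k+1) = (p+2).choose (k+1) :=
    (Nat.choose_succ_succ (p+1) k).symm
  have c0 : (0:ℝ) < (p+1).choose k := by exact_mod_cast Nat.choose_pos (by omega)
  have c1 : (0:ℝ) < (p+1).choose (k+1) := by exact_mod_cast Nat.choose_pos hk
  have c2 : (0:ℝ) < (p+1-1).choose k := by exact_mod_cast Nat.choose_pos (by omega)
  have h1R : ((p:ℝ)+1+1) * ((p+1).choose k : ℝ) = ((p+2).choose (k+1) : ℝ) * ((k:ℝ)+1) := by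
    exact_mod_cast h1
  have h2R : ((p:ℝ)+1) * ((p+1-1).choose k : ℝ) = ((p+1).choose (k+1) : ℝ) * ((k:ℝ)+1) := by
    exact_mod_cast h2
  have hpR : ((p+1).choose k : ℝ) + ((p+1).choose (k+1) : ℝ) = ((p+2).choose (k+1) : ℝ) := by
    exact_mod_cast hp
  have hX : (0:ℝ) < (p:ℝ)+1 := by positivity
  push_cast at *
  field_simp
  linear_combination ((((p+1).choose k : ℝ)+((p+1).choose (k+1) : ℝ))) * h2R
    - (((p+1).choose (k+1):ℝ)) * h1R
    + (((p+1).choose (k+1):ℝ)*((k:ℝ)+1)) * hpR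

private lemma sum_id_beta (a s : ℕ) (hs : s + 1 ≤ a) : ∀ m : ℕ,
    ∑ j ∈ range (m+1), (m.choose j : ℝ) *
      (1 / (((a+m : ℕ):ℝ) * (((a+m-1).choose (s+j)) : ℝ))) =
    1 / ((a:ℝ) * ((a-1).choose s : ℝ)) := by
  intro m
  induction m with
  | zero => simp
  | succ m ih =>
    have e2 : a + (m+1) = a + m + 1 := by omega
    have e1 : a + m + 1 - 1 = a + m := by omega
    simp only [e2, e1]
    set g : ℕ → ℝ := fun j => 1 / (((a+m+1:ℕ):ℝ) * (((a+m).choose (s+j)):ℝ)) with hg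
    have hsum : ∑ j ∈ range (m+1+1), ((m+1).choose j : ℝ) * g j
        = ∑ j ∈ range (m+1), (m.choose j : ℝ) * (g j + g (j+1)) := by
      rw [Finset.sum_range_succ' (fun j => ((m+1).choose j : ℝ) * g j) (m+1)]
      have hc : ∀ j ∈ range (m+1), ((m+1).choose (j+1) : ℝ) * g (j+1)
          = (m.choose j : ℝ) * g (j+1) + (m.choose (j+1) : ℝ) * g (j+1) := by
        intro j _
        have : ((m+1).choose (j+1) : ℝ) = (m.choose j : ℝ) + (m.choose (j+1) : ℝ) := by
          exact_mod_cast congrArg Nat.cast (Nat.choose_succ_succ m j)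
        rw [this]; ring
      rw [Finset.sum_congr rfl hc, Finset.sum_add_distrib]
      have h2 : ∑ j ∈ range (m+1), ((m.choose (j+1)):ℝ) * g (j+1) + ((m.choose 0):ℝ) * g 0
          = ∑ j ∈ range (m+1+1), (m.choose j : ℝ) * g j :=
        (Finset.sum_range_succ' (fun j => (m.choose j : ℝ) * g j) (m+1)).symm
      have h3 : ∑ j ∈ range (m+1+1), (m.choose j : ℝ) * g j
          = ∑ j ∈ range (m+1), (m.choose j : ℝ) * g j := by
        rw [Finset.sum_range_succ]; simp
      have hr : ∑ j ∈ range (m+1), (m.choose j:ℝ) * (g j + g (j+1))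
          = ∑ j ∈ range (m+1), (m.choose j:ℝ) * g j
            + ∑ j ∈ range (m+1), (m.choose j:ℝ) * g (j+1) := by
        rw [← Finset.sum_add_distrib]; exact Finset.sum_congr rfl (fun j _ => by ring)
      have h4 : ((m+1).choose 0 : ℝ) = ((m.choose 0 : ℕ) : ℝ) := by simp
      rw [hr, h4]
      linear_combination h2 + h3
    rw [hsum, ← ih]
    refine Finset.sum_congr rfl (fun j hj => ?_)
    rw [mem_range] at hj
    have hk : (s + j) + 1 ≤ a + m := by omega
    have hkey := key_beta (a+m) (s+j) (by omega) hk
    have hgj : g j + g (j+1) = 1 / (((a+m : ℕ):ℝ) * (((a+m-1).choose (s+j)) : ℝ)) := by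
      rw [hg]
      push_cast at hkey ⊢
      convert hkey using 3
      simp only [Nat.add_assoc]
    rw [hgj]

/-- The Shapley value of player `i` in the game `ν`:
`φ(i) = Σ_{T ⊆ N \ {i}} 1/(n · C(n-1, |T|)) · (ν(T ∪ {i}) - ν(T))`. -/
noncomputable def shapleyValue {ι : Type*} [Fintype ι] [DecidableEq ι]
    (ν : Finset ι → ℝ) (i : ι) : ℝ :=
  ∑ T ∈ (Finset.univ.erase i).powerset,
    (1 / ((Fintype.card ι : ℝ) * ((Fintype.card ι - 1).choose T.card : ℝ))) *
      (ν (insert i T) - ν T)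

/-- **Exactness of L-Shapley under invariance.** If the game `ν` is `A`-invariant
(`ν(T) = ν(T ∩ A)` for all `T`) with `A` nonempty and `i ∈ A`, then the Shapley value
of `i` equals the L-Shapley sum restricted to subsets of `A` containing `i`:
`φ(i) = Σ_{T ⊆ A, i ∈ T} 1/(|A| · C(|A|-1, |T|-1)) · (ν(T) - ν(T \ {i}))`. -/
theorem lshapley_exact_under_invariance {ι : Type*} [Fintype ι] [DecidableEq ι]
    (A : Finset ι) (hA : A.Nonempty) (ν : Finset ι → ℝ)
    (hinv : ∀ T : Finset ι, ν T = ν (T ∩ A)) (i : ι) (hi : i ∈ A) :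
    shapleyValue ν i =
      ∑ T ∈ A.powerset.filter (fun T => i ∈ T),
        (1 / ((A.card : ℝ) * ((A.card - 1).choose (T.card - 1) : ℝ))) *
          (ν T - ν (T.erase i)) := by
  classical
  set n := Fintype.card ι with hn
  set a := A.card with ha
  have ha1 : 1 ≤ a := Finset.card_pos.mpr hA
  have han : a ≤ n := by
    rw [ha, hn, ← Finset.card_univ]; exact Finset.card_le_card (Finset.subset_univ A)
  -- the weight identity for each S ⊆ A.erase i
  have hW : ∀ S ∈ (A.erase i).powerset,
      (∑ T ∈ (Finset.univ.erase i).powerset.filter (fun T => T ∩ A = S),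
        (1 / ((n:ℝ) * ((n-1).choose T.card : ℝ))))
      = 1 / ((a:ℝ) * ((a-1).choose S.card : ℝ)) := by
    intro S hS
    rw [Finset.mem_powerset] at hS
    have hSA : S ⊆ A := hS.trans (Finset.erase_subset _ _)
    have hiS : i ∉ S := fun h => (Finset.mem_erase.mp (hS h)).1 rfl
    set U : Finset ι := Finset.univ \ A with hU
    have hUcard : a + U.card = n := by
      rw [hU, Finset.card_sdiff_of_subset (Finset.subset_univ A), Finset.card_univ, ← hn, ← ha]
      omega
    have hbij : ∑ T ∈ (Finset.univ.erase i).powerset.filter (fun T => T ∩ A = S),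
        (1 / ((n:ℝ) * ((n-1).choose T.card : ℝ)))
        = ∑ B ∈ U.powerset, (1 / ((n:ℝ) * ((n-1).choose (S.card + B.card) : ℝ))) := by
      refine Finset.sum_nbij' (fun T => T \ A) (fun B => S ∪ B) ?_ ?_ ?_ ?_ ?_
      · intro T _
        rw [Finset.mem_powerset]
        exact Finset.sdiff_subset_sdiff (Finset.subset_univ T) (le_refl A)
      · intro B hB
        rw [Finset.mem_powerset] at hB
        rw [Finset.mem_filter, Finset.mem_powerset]
        constructor
        · intro x hx
          rw [Finset.mem_union] at hx
          rw [Finset.mem_erase]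
          refine ⟨?_, Finset.mem_univ x⟩
          rcases hx with hx | hx
          · exact (Finset.mem_erase.mp (hS hx)).1
          · intro h; exact (Finset.mem_sdiff.mp (hB hx)).2 (h ▸ hi)
        · ext x
          simp only [Finset.mem_inter, Finset.mem_union]
          constructor
          · rintro ⟨hx | hx, hxA⟩
            · exact hx
            · exact absurd hxA (Finset.mem_sdiff.mp (hB hx)).2
          · intro hx; exact ⟨Or.inl hx, hSA hx⟩
      · intro T hT
        rw [Finset.mem_filter] at hT
        rw [← hT.2]
        ext x
        simp only [Finset.mem_union, Finset.mem_inter, Finset.mem_sdiff]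
        tauto
      · intro B hB
        rw [Finset.mem_powerset] at hB
        ext x
        simp only [Finset.mem_union, Finset.mem_sdiff]
        constructor
        · rintro ⟨hx | hx, hxA⟩
          · exact absurd (hSA hx) hxA
          · exact hx
        · intro hx; exact ⟨Or.inr hx, (Finset.mem_sdiff.mp (hB hx)).2⟩
      · intro T hT
        rw [Finset.mem_filter] at hT
        have hcard : T.card = S.card + (T \ A).card := by
          rw [← hT.2, Finset.card_inter_add_card_sdiff]
        rw [hcard]
    rw [hbij, Finset.sum_powerset_apply_card (fun k => 1 / ((n:ℝ) * ((n-1).choose (S.card + k) : ℝ)))]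
    have hs1 : S.card + 1 ≤ a := by
      have := Finset.card_le_card hS
      rw [Finset.card_erase_of_mem hi, ← ha] at this
      omega
    have := sum_id_beta a S.card hs1 U.card
    rw [hUcard] at this
    rw [← this]
    refine Finset.sum_congr rfl (fun j _ => ?_)
    rw [nsmul_eq_mul]
  -- unfold the Shapley value and fiber over S = T ∩ A
  have hmaps : ∀ T ∈ (Finset.univ.erase i).powerset, T ∩ A ∈ (A.erase i).powerset := by
    intro T hT
    rw [Finset.mem_powerset] at hT ⊢
    intro x hx
    rw [Finset.mem_inter] at hx
    exact Finset.mem_erase.mpr ⟨(Finset.mem_erase.mp (hT hx.1)).1, hx.2⟩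
  have hLHS : shapleyValue ν i = ∑ S ∈ (A.erase i).powerset,
      (1 / ((a:ℝ) * ((a-1).choose S.card : ℝ))) * (ν (insert i S) - ν S) := by
    rw [shapleyValue, ← Finset.sum_fiberwise_of_maps_to hmaps
      (fun T => (1 / ((n:ℝ) * ((n-1).choose T.card : ℝ))) * (ν (insert i T) - ν T))]
    refine Finset.sum_congr rfl (fun S hS => ?_)
    have hcongr : ∀ T ∈ (Finset.univ.erase i).powerset.filter (fun T => T ∩ A = S),
        (1 / ((n:ℝ) * ((n-1).choose T.card : ℝ))) * (ν (insert i T) - ν T)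
        = (1 / ((n:ℝ) * ((n-1).choose T.card : ℝ))) * (ν (insert i S) - ν S) := by
      intro T hT
      rw [Finset.mem_filter] at hT
      have h1 : ν T = ν S := by rw [hinv T, hT.2]
      have h2 : ν (insert i T) = ν (insert i S) := by
        rw [hinv (insert i T), Finset.insert_inter_of_mem hi, hT.2]
      rw [h1, h2]
    rw [Finset.sum_congr rfl hcongr, ← Finset.sum_mul, hW S hS]
  -- rewrite the RHS as a sum over S ⊆ A.erase i
  have hRHS : ∑ T ∈ A.powerset.filter (fun T => i ∈ T),
      (1 / ((a:ℝ) * ((a-1).choose (T.card - 1) : ℝ))) * (ν T - ν (T.erase i))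
      = ∑ S ∈ (A.erase i).powerset,
        (1 / ((a:ℝ) * ((a-1).choose S.card : ℝ))) * (ν (insert i S) - ν S) := by
    refine Finset.sum_nbij' (fun T => T.erase i) (fun S => insert i S) ?_ ?_ ?_ ?_ ?_
    · intro T hT
      rw [Finset.mem_filter, Finset.mem_powerset] at hT
      rw [Finset.mem_powerset]
      exact Finset.erase_subset_erase i hT.1
    · intro S hS
      rw [Finset.mem_powerset] at hS
      rw [Finset.mem_filter, Finset.mem_powerset]
      exact ⟨Finset.insert_subset hi (hS.trans (Finset.erase_subset _ _)),
        Finset.mem_insert_self i S⟩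
    · intro T hT
      rw [Finset.mem_filter] at hT
      exact Finset.insert_erase hT.2
    · intro S hS
      rw [Finset.mem_powerset] at hS
      have hiS : i ∉ S := fun h => (Finset.mem_erase.mp (hS h)).1 rfl
      exact Finset.erase_insert hiS
    · intro T hT
      rw [Finset.mem_filter] at hT
      rw [Finset.insert_erase hT.2, Finset.card_erase_of_mem hT.2]
  rw [hLHS, hRHS]
end

section
/- (Combinatorial identity) For all natural numbers n, s, t with t ≤ s, the following identity holds in ℚ (equivalently ℝ): Σ_{j=0}^{n} C(n, j) / C(n+s, j+t) = (s + 1 + n) / ((s + 1) · C(s, t)). -/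
lemma key_choose (m k : ℕ) (hk : k ≤ m) :
    (1 : ℚ) / ((m + 1).choose k : ℚ) + 1 / ((m + 1).choose (k + 1) : ℚ) =
      ((m : ℚ) + 2) / (((m : ℚ) + 1) * (m.choose k : ℚ)) := by
  have h1 : ((m.choose k : ℚ)) * ((m : ℚ) + 1) = ((m + 1).choose k : ℚ) * ((m : ℚ) + 1 - k) := by
    have := Nat.choose_mul_succ_eq m k
    have hsub : ((m + 1 - k : ℕ) : ℚ) = (m : ℚ) + 1 - k := by
      rw [Nat.cast_sub (by omega)]
      push_cast; ring
    calc ((m.choose k : ℚ)) * ((m : ℚ) + 1) = ((m.choose k * (m + 1) : ℕ) : ℚ) := by push_cast; ring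
      _ = (((m + 1).choose k * (m + 1 - k) : ℕ) : ℚ) := by rw [this]
      _ = ((m + 1).choose k : ℚ) * ((m : ℚ) + 1 - k) := by push_cast [hsub]; ring
  have h2 : ((m : ℚ) + 1) * (m.choose k : ℚ) = ((m + 1).choose (k + 1) : ℚ) * ((k : ℚ) + 1) := by
    have := Nat.add_one_mul_choose_eq m k
    exact_mod_cast congrArg (Nat.cast : ℕ → ℚ) this
  have hA : ((m + 1).choose k : ℚ) ≠ 0 := by
    exact_mod_cast Nat.choose_pos (le_trans hk (Nat.le_succ m)) |>.ne'
  have hB : ((m + 1).choose (k + 1) : ℚ) ≠ 0 := by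
    exact_mod_cast Nat.choose_pos (Nat.succ_le_succ hk) |>.ne'
  have hC : ((m.choose k : ℚ)) ≠ 0 := by
    exact_mod_cast (Nat.choose_pos hk).ne'
  have hm : ((m : ℚ) + 1) ≠ 0 := by positivity
  field_simp
  nlinarith [h1, h2]

/-- **Combinatorial identity.** For natural numbers `n, s, t` with `t ≤ s`:
`Σ_{j=0}^{n} C(n, j) / C(n+s, j+t) = (s + 1 + n) / ((s + 1) · C(s, t))`. -/
theorem choose_ratio_sum_identity (n s t : ℕ) (hts : t ≤ s) :
    ∑ j ∈ Finset.range (n + 1), (n.choose j : ℚ) / ((n + s).choose (j + t) : ℚ) =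
      ((s : ℚ) + 1 + (n : ℚ)) / (((s : ℚ) + 1) * (s.choose t : ℚ)) := by
  have hst : ((s.choose t : ℚ)) ≠ 0 := by exact_mod_cast (Nat.choose_pos hts).ne'
  have hs1 : ((s : ℚ) + 1) ≠ 0 := by positivity
  induction n with
  | zero =>
    simp
    field_simp
  | succ n ih =>
    -- abbreviations
    have split : ∑ j ∈ Finset.range (n + 1 + 1), ((n+1).choose j : ℚ) / (((n+1+s).choose (j + t)) : ℚ)
        = (∑ j ∈ Finset.range (n + 1), ((n.choose j : ℚ) / (((n+1+s).choose (j + 1 + t)) : ℚ)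
              + (n.choose (j+1) : ℚ) / (((n+1+s).choose (j + 1 + t)) : ℚ)))
          + (1 : ℚ) / (((n+1+s).choose t) : ℚ) := by
      rw [Finset.sum_range_succ']
      congr 1
      · refine Finset.sum_congr rfl (fun j _ => ?_)
        rw [Nat.choose_succ_succ]
        push_cast
        rw [add_div]
      · simp
    have hB : (∑ j ∈ Finset.range (n + 1), (n.choose (j+1) : ℚ) / (((n+1+s).choose (j + 1 + t)) : ℚ))
          + (1 : ℚ) / (((n+1+s).choose t) : ℚ)
        = ∑ j ∈ Finset.range (n + 1), (n.choose j : ℚ) / (((n+1+s).choose (j + t)) : ℚ) := by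
      have := Finset.sum_range_succ' (fun j => (n.choose j : ℚ) / (((n+1+s).choose (j + t)) : ℚ)) (n+1)
      have h0 : ((n.choose 0 : ℚ)) / (((n+1+s).choose (0 + t)) : ℚ) = 1 / (((n+1+s).choose t) : ℚ) := by
        norm_num
      rw [← h0, ← this, Finset.sum_range_succ]
      simp [Nat.choose_succ_self]
    rw [split, Finset.sum_add_distrib, add_assoc, hB, ← Finset.sum_add_distrib]
    have key' : ∀ j ∈ Finset.range (n+1),
        (n.choose j : ℚ) / (((n+1+s).choose (j + 1 + t)) : ℚ)
          + (n.choose j : ℚ) / (((n+1+s).choose (j + t)) : ℚ)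
        = (((n+s : ℕ) : ℚ) + 2) / (((n+s : ℕ) : ℚ) + 1)
            * ((n.choose j : ℚ) / (((n+s).choose (j + t)) : ℚ)) := by
      intro j hj
      have hjn : j + t ≤ n + s := by
        have := Finset.mem_range.mp hj; omega
      have h := key_choose (n+s) (j+t) hjn
      have e1 : n+1+s = (n+s)+1 := by omega
      have e2 : j+1+t = (j+t)+1 := by omega
      rw [e1, e2]
      calc (n.choose j : ℚ) / (((n+s+1).choose (j + t + 1)) : ℚ)
            + (n.choose j : ℚ) / (((n+s+1).choose (j + t)) : ℚ)
          = (n.choose j : ℚ) * ((1:ℚ) / (((n+s+1).choose (j+t)) : ℚ)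
              + 1 / (((n+s+1).choose (j+t+1)) : ℚ)) := by ring
        _ = (n.choose j : ℚ) * ((((n+s : ℕ) : ℚ) + 2) / ((((n+s : ℕ) : ℚ) + 1) * (((n+s).choose (j+t)) : ℚ))) := by
            rw [h]
        _ = (((n+s : ℕ) : ℚ) + 2) / (((n+s : ℕ) : ℚ) + 1)
            * ((n.choose j : ℚ) / (((n+s).choose (j + t)) : ℚ)) := by
            have hd : (((n+s : ℕ) : ℚ) + 1) ≠ 0 := by positivity
            have he : (((n+s).choose (j+t) : ℕ) : ℚ) ≠ 0 := by
              exact_mod_cast (Nat.choose_pos hjn).ne'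
            field_simp
    rw [Finset.sum_congr rfl key', ← Finset.mul_sum, ih]
    have hns : (((n+s : ℕ) : ℚ) + 1) ≠ 0 := by positivity
    push_cast
    field_simp
    ring
end

section
/- (Trivial Shapley interactions of structured games) Let N be a finite set with |N| = n and let A_1, ..., A_K ⊆ N. For each j let E_j be a real vector space, let ν_j be a game on N with values in E_j that is A_j-invariant, and let L_j : E_j → ℝ be a linear map; let c ∈ ℝ, and define the real-valued game ν on N by ν(T) := c + Σ_{j=1}^{K} L_j(ν_j(T)). Then for every subset S ⊆ N that is not contained in any A_j, the Shapley interaction index of ν vanishes: φ^{SII}(S) = 0. -/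
lemma cancel_sum {ι : Type*} [DecidableEq ι] (S A : Finset ι) (i : ι)
    (hi : i ∈ S) (hiA : i ∉ A) (f : Finset ι → ℝ) :
    ∑ L ∈ S.powerset, (-1 : ℝ) ^ (S.card - L.card) * f (L ∩ A) = 0 := by
  have hS : S = insert i (S.erase i) := (Finset.insert_erase hi).symm
  have hni : i ∉ S.erase i := Finset.notMem_erase i S
  rw [hS, Finset.sum_powerset_insert hni, ← Finset.sum_add_distrib]
  apply Finset.sum_eq_zero
  intro L hL
  rw [Finset.mem_powerset] at hL
  have hiL : i ∉ L := fun h => hni (hL h)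
  have hins : (insert i L) ∩ A = L ∩ A := by
    rw [Finset.insert_inter_of_notMem hiA]
  have hcardS : (insert i (S.erase i)).card = (S.erase i).card + 1 :=
    Finset.card_insert_of_notMem hni
  have hcardL : (insert i L).card = L.card + 1 := Finset.card_insert_of_notMem hiL
  have hLS : L.card ≤ (S.erase i).card := Finset.card_le_card hL
  rw [hins, hcardS, hcardL]
  have h1 : (S.erase i).card + 1 - L.card = ((S.erase i).card - L.card) + 1 := by omega
  have h2 : (S.erase i).card + 1 - (L.card + 1) = (S.erase i).card - L.card := by omega
  rw [h1, h2, pow_succ]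
  ring

noncomputable def shapleyInteractionIndex {ι : Type*} [Fintype ι] [DecidableEq ι]
    (ν : Finset ι → ℝ) (S : Finset ι) : ℝ :=
  ∑ T ∈ (Finset.univ \ S).powerset,
    (1 / (((Fintype.card ι - S.card + 1 : ℕ) : ℝ) *
        (((Fintype.card ι - S.card).choose T.card : ℕ) : ℝ))) *
      ∑ L ∈ S.powerset, (-1 : ℝ) ^ (S.card - L.card) * ν (T ∪ L)


/-- **Trivial Shapley interactions of structured games.** Let
`ν(T) := c + Σ_j L_j(ν_j(T))`, where each game `ν_j` (with values in a real vector space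
`E j`) is `A j`-invariant and each `L j : E j → ℝ` is linear. Then the Shapley
interaction index of `ν` vanishes on every coalition `S` not contained in any `A j`. -/
theorem trivial_shapley_interactions {ι : Type*} [Fintype ι] [DecidableEq ι]
    (K : ℕ) (hK : 0 < K) (A : Fin K → Finset ι)
    (E : Fin K → Type*) [∀ j, AddCommGroup (E j)] [∀ j, Module ℝ (E j)]
    (ν : ∀ j, Finset ι → E j)
    (hinv : ∀ (j : Fin K) (T : Finset ι), ν j T = ν j (T ∩ A j))
    (L : ∀ j, E j →ₗ[ℝ] ℝ) (c : ℝ) :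
    ∀ S : Finset ι, (∀ j : Fin K, ¬ S ⊆ A j) →
      shapleyInteractionIndex (fun T => c + ∑ j : Fin K, L j (ν j T)) S = 0 := by
  intro S hS
  have hSne : S.Nonempty := by
    rcases Finset.eq_empty_or_nonempty S with h | h
    · exact absurd (h ▸ Finset.empty_subset _) (hS ⟨0, hK⟩)
    · exact h
  obtain ⟨i₀, hi₀⟩ := hSne
  unfold shapleyInteractionIndex
  apply Finset.sum_eq_zero
  intro T _
  rw [mul_eq_zero]; right
  have : ∀ Lset ∈ S.powerset,
      (-1 : ℝ) ^ (S.card - Lset.card) * (c + ∑ j : Fin K, L j (ν j (T ∪ Lset)))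
      = (-1 : ℝ) ^ (S.card - Lset.card) * c
        + ∑ j : Fin K, (-1 : ℝ) ^ (S.card - Lset.card) * L j (ν j (T ∪ Lset)) := by
    intro Lset _; rw [mul_add, Finset.mul_sum]
  rw [Finset.sum_congr rfl this, Finset.sum_add_distrib]
  have hc : ∑ Lset ∈ S.powerset, (-1 : ℝ) ^ (S.card - Lset.card) * c = 0 := by
    have := cancel_sum S ∅ i₀ hi₀ (Finset.notMem_empty i₀) (fun _ => c)
    simpa using this
  rw [hc, zero_add, Finset.sum_comm]
  apply Finset.sum_eq_zero
  intro j _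
  obtain ⟨i, hiS, hiA⟩ := Finset.not_subset.mp (hS j)
  have key := cancel_sum S (A j) i hiS hiA (fun M => L j (ν j ((T ∩ A j) ∪ M)))
  rw [← key]
  apply Finset.sum_congr rfl
  intro Lset _
  congr 2
  rw [hinv j (T ∪ Lset), Finset.union_inter_distrib_right]
end

section
/- (Shapley interaction index from Möbius interactions) Let N be a finite set with |N| = n and let ν be a real-valued game on N. Then for every subset S ⊆ N, the Shapley interaction index equals φ^{SII}(S) = Σ_{T : S ⊆ T ⊆ N} m(T) / (|T| − |S| + 1). -/
/-- The Möbius interaction (Harsanyi dividend) of a game `ν` at a coalition `S`: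
`m(S) = Σ_{T ⊆ S} (-1)^{|S|-|T|} ν(T)`. -/
noncomputable def mobiusInteraction {ι : Type*} [DecidableEq ι]
    (ν : Finset ι → ℝ) (S : Finset ι) : ℝ :=
  ∑ T ∈ S.powerset, ((-1 : ℝ) ^ (S.card - T.card)) * ν T

/-- The key beta-integral identity:
`Σ_{k=0}^m (-1)^k C(m,k)/(k+r+1) = m! r!/(m+r+1)!`. -/
lemma shapley_key_identity (m : ℕ) : ∀ r : ℕ,
    ∑ k ∈ Finset.range (m+1), (-1:ℝ)^k * (m.choose k) / (k+r+1)
    = (m.factorial * r.factorial : ℕ) / ((m+r+1).factorial : ℕ) := by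
  induction m with
  | zero =>
    intro r
    have h : (r.factorial : ℝ) ≠ 0 := by positivity
    simp [Nat.factorial_succ]
    field_simp
  | succ m ih =>
    intro r
    have h1 : ∑ k ∈ Finset.range (m+2), (-1:ℝ)^k * ((m+1).choose k) / (k+r+1)
        = (∑ k ∈ Finset.range (m+1), (-1:ℝ)^(k+1) * (m.choose (k+1)) / (k+1+r+1)
          + ∑ k ∈ Finset.range (m+1), (-1:ℝ)^(k+1) * (m.choose k) / (k+1+r+1))
          + 1 / (r+1) := by
      rw [Finset.sum_range_succ' (fun k => (-1:ℝ)^k * ((m+1).choose k) / (k+r+1)) (m+1)]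
      rw [show (∑ k ∈ Finset.range (m+1), (-1:ℝ)^(k+1) * ((m+1).choose (k+1)) / ((k+1:ℕ)+r+1))
          = ∑ k ∈ Finset.range (m+1), ((-1:ℝ)^(k+1) * (m.choose (k+1)) / (k+1+r+1)
            + (-1:ℝ)^(k+1) * (m.choose k) / (k+1+r+1)) from
        Finset.sum_congr rfl fun k hk => by rw [Nat.choose_succ_succ]; push_cast; ring]
      rw [Finset.sum_add_distrib]
      norm_num
    have h2 : ∑ k ∈ Finset.range (m+1), (-1:ℝ)^(k+1) * (m.choose k) / (k+1+r+1)
        = -((m.factorial * (r+1).factorial : ℕ) / ((m+(r+1)+1).factorial : ℕ)) := by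
      rw [← ih (r+1), ← Finset.sum_neg_distrib]
      apply Finset.sum_congr rfl
      intro k hk
      push_cast
      ring
    have h3 : ∑ k ∈ Finset.range (m+1), (-1:ℝ)^(k+1) * (m.choose (k+1)) / (k+1+r+1) + 1/(r+1)
        = (m.factorial * r.factorial : ℕ) / ((m+r+1).factorial : ℕ) := by
      rw [← ih r]
      rw [Finset.sum_range_succ' (fun k => (-1:ℝ)^k * (m.choose k) / (k+r+1)) m]
      have : ∑ k ∈ Finset.range (m+1), (-1:ℝ)^(k+1) * (m.choose (k+1)) / (k+1+r+1)
          = ∑ k ∈ Finset.range m, (-1:ℝ)^(k+1) * (m.choose (k+1)) / ((k+1:ℕ)+r+1) := by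
        rw [Finset.sum_range_succ]
        simp
      rw [this]
      push_cast
      norm_num
    rw [h1, add_comm, ← add_assoc, add_comm (1/((r:ℝ)+1)), h3, h2]
    have e1 : ((m+1+r+1).factorial : ℝ) = (m+r+2) * (m+r+1).factorial := by
      rw [show m+1+r+1 = (m+r+1)+1 by ring, Nat.factorial_succ]
      push_cast; ring
    have e2 : ((m+(r+1)+1).factorial : ℝ) = (m+r+2) * (m+r+1).factorial := by
      rw [show m+(r+1)+1 = (m+r+1)+1 by ring, Nat.factorial_succ]
      push_cast; ring
    have e3 : (((r+1)).factorial : ℝ) = (r+1) * r.factorial := by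
      rw [Nat.factorial_succ]; push_cast; ring
    have e4 : ((m+1).factorial : ℝ) = (m+1) * m.factorial := by
      rw [Nat.factorial_succ]; push_cast; ring
    have hf1 : ((m+r+1).factorial : ℝ) ≠ 0 := by positivity
    push_cast
    rw [e1, e2, e3, e4]
    field_simp
    ring

section Aux
variable {ι : Type*} [Fintype ι] [DecidableEq ι]

/-- Sum over supersets of `A` of signed reciprocals, evaluated via the key identity. -/
lemma shapley_sum_superset_coeff (A : Finset ι) (s u : ℕ)
    (hs : s ≤ A.card) (hu : u ≤ A.card) :
    ∑ T ∈ (Finset.univ.powerset.filter (fun T : Finset ι => A ⊆ T)),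
      (-1:ℝ)^(T.card - u) / ((T.card - s + 1 : ℕ):ℝ)
    = (-1:ℝ)^(A.card - u) *
      (((Fintype.card ι - A.card).factorial * (A.card - s).factorial : ℕ) /
        (((Fintype.card ι - s + 1).factorial : ℕ) : ℝ)) := by
  have han : A.card ≤ Fintype.card ι := by
    simpa using Finset.card_le_card (Finset.subset_univ A)
  rw [Finset.sum_nbij' (fun T => T \ A) (fun V => A ∪ V)
      (t := (Finset.univ \ A).powerset)
      (g := fun V => (-1:ℝ)^(A.card + V.card - u) / ((A.card + V.card - s + 1 : ℕ):ℝ))]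
  · rw [Finset.sum_powerset]
    have hM : (Finset.univ \ A).card = Fintype.card ι - A.card := by
      rw [Finset.card_sdiff_of_subset (Finset.subset_univ A), Finset.card_univ]
    set M := Fintype.card ι - A.card with hMdef
    rw [hM]
    have : ∀ j ∈ Finset.range (M+1),
        (∑ V ∈ Finset.powersetCard j (Finset.univ \ A),
          (-1:ℝ)^(A.card + V.card - u) / ((A.card + V.card - s + 1 : ℕ):ℝ))
        = (-1:ℝ)^(A.card - u) *
          ((-1:ℝ)^j * (M.choose j) / ((j : ℝ) + ((A.card - s : ℕ) : ℝ) + 1)) := by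
      intro j hj
      rw [show (∑ V ∈ Finset.powersetCard j (Finset.univ \ A),
          (-1:ℝ)^(A.card + V.card - u) / ((A.card + V.card - s + 1 : ℕ):ℝ))
          = ∑ V ∈ Finset.powersetCard j (Finset.univ \ A),
            (fun k => (-1:ℝ)^(A.card + k - u) / ((A.card + k - s + 1 : ℕ):ℝ)) V.card from rfl]
      rw [Finset.sum_powersetCard j (Finset.univ \ A)
        (fun k => (-1:ℝ)^(A.card + k - u) / ((A.card + k - s + 1 : ℕ):ℝ)), hM]
      rw [nsmul_eq_mul]
      have e1 : A.card + j - u = (A.card - u) + j := by omega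
      have e2 : A.card + j - s + 1 = j + (A.card - s) + 1 := by omega
      rw [e1, e2, pow_add]
      push_cast
      ring
    rw [Finset.sum_congr rfl this, ← Finset.mul_sum, shapley_key_identity M (A.card - s)]
    have : M + (A.card - s) + 1 = Fintype.card ι - s + 1 := by omega
    rw [this]
  · intro T hT
    simp only [Finset.mem_filter, Finset.mem_powerset] at hT ⊢
    exact Finset.sdiff_subset_sdiff hT.1 (le_refl A)
  · intro V hV
    simp only [Finset.mem_powerset] at hV
    simp only [Finset.mem_filter, Finset.mem_powerset]
    exact ⟨Finset.union_subset (Finset.subset_univ A) (Finset.subset_univ V),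
      Finset.subset_union_left⟩
  · intro T hT
    simp only [Finset.mem_filter, Finset.mem_powerset] at hT
    exact Finset.union_sdiff_of_subset hT.2
  · intro V hV
    simp only [Finset.mem_powerset] at hV
    have hd : Disjoint A V :=
      Finset.disjoint_left.mpr fun x hxA hxV => (Finset.mem_sdiff.mp (hV hxV)).2 hxA
    exact Finset.union_sdiff_cancel_left hd
  · intro T hT
    simp only [Finset.mem_filter, Finset.mem_powerset] at hT
    have hle := Finset.card_le_card hT.2
    have hc : A.card + (T \ A).card = T.card := by
      rw [Finset.card_sdiff_of_subset hT.2]; omega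
    rw [hc]

lemma shapley_pair_decomp (S : Finset ι) (p : Finset ι × Finset ι)
    (h1 : p.1 ⊆ Finset.univ \ S) (h2 : p.2 ⊆ S) :
    (p.1 ∪ p.2) \ S = p.1 ∧ (p.1 ∪ p.2) ∩ S = p.2 := by
  have hd : Disjoint p.1 S :=
    Finset.disjoint_left.mpr fun x hx hxs => (Finset.mem_sdiff.mp (h1 hx)).2 hxs
  constructor
  · rw [Finset.union_sdiff_distrib, Finset.sdiff_eq_self_iff_disjoint.mpr hd,
      Finset.sdiff_eq_empty_iff_subset.mpr h2, Finset.union_empty]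
  · rw [Finset.union_inter_distrib_right, Finset.disjoint_iff_inter_eq_empty.mp hd,
      Finset.inter_eq_left.mpr h2, Finset.empty_union]

/-- The Shapley interaction index as a sum over all coalitions `W`. -/
lemma shapley_lhs_expand (ν : Finset ι → ℝ) (S : Finset ι) :
    shapleyInteractionIndex ν S
    = ∑ W ∈ Finset.univ.powerset,
        (1 / (((Fintype.card ι - S.card + 1 : ℕ) : ℝ) *
          (((Fintype.card ι - S.card).choose (W \ S).card : ℕ) : ℝ))) *
          ((-1 : ℝ) ^ (S.card - (W ∩ S).card) * ν W) := by
  rw [shapleyInteractionIndex]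
  rw [show (∑ T ∈ (Finset.univ \ S).powerset,
    (1 / (((Fintype.card ι - S.card + 1 : ℕ) : ℝ) *
        (((Fintype.card ι - S.card).choose T.card : ℕ) : ℝ))) *
      ∑ L ∈ S.powerset, (-1 : ℝ) ^ (S.card - L.card) * ν (T ∪ L))
    = ∑ p ∈ (Finset.univ \ S).powerset ×ˢ S.powerset,
      (1 / (((Fintype.card ι - S.card + 1 : ℕ) : ℝ) *
        (((Fintype.card ι - S.card).choose p.1.card : ℕ) : ℝ))) *
        ((-1 : ℝ) ^ (S.card - p.2.card) * ν (p.1 ∪ p.2)) from by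
    rw [Finset.sum_product]
    exact Finset.sum_congr rfl fun T hT => by rw [Finset.mul_sum]]
  apply Finset.sum_nbij' (i := fun p => p.1 ∪ p.2) (j := fun W => (W \ S, W ∩ S))
  · intro p hp
    simp only [Finset.mem_powerset]
    exact Finset.subset_univ _
  · intro W hW
    simp only [Finset.mem_product, Finset.mem_powerset]
    exact ⟨Finset.sdiff_subset_sdiff (Finset.subset_univ W) le_rfl, Finset.inter_subset_right⟩
  · intro p hp
    simp only [Finset.mem_product, Finset.mem_powerset] at hp
    obtain ⟨e1, e2⟩ := shapley_pair_decomp S p hp.1 hp.2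
    exact Prod.ext e1 e2
  · intro W hW
    exact Finset.sdiff_union_inter W S
  · intro p hp
    simp only [Finset.mem_product, Finset.mem_powerset] at hp
    obtain ⟨e1, e2⟩ := shapley_pair_decomp S p hp.1 hp.2
    rw [e1, e2]

/-- The right-hand side as a sum over all coalitions `U`. -/
lemma shapley_rhs_expand (ν : Finset ι → ℝ) (S : Finset ι) :
    (∑ T ∈ Finset.univ.powerset.filter (fun T : Finset ι => S ⊆ T),
      mobiusInteraction ν T / ((T.card - S.card + 1 : ℕ) : ℝ))
    = ∑ U ∈ (Finset.univ : Finset ι).powerset,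
        (∑ T ∈ Finset.univ.powerset.filter (fun T : Finset ι => S ∪ U ⊆ T),
          (-1:ℝ)^(T.card - U.card) / ((T.card - S.card + 1 : ℕ):ℝ)) * ν U := by
  simp only [mobiusInteraction]
  have step1 : (∑ T ∈ Finset.univ.powerset.filter (fun T : Finset ι => S ⊆ T),
      (∑ U ∈ T.powerset, ((-1 : ℝ) ^ (T.card - U.card)) * ν U) / ((T.card - S.card + 1 : ℕ) : ℝ))
      = ∑ T ∈ Finset.univ.powerset.filter (fun T : Finset ι => S ⊆ T),
        ∑ U ∈ T.powerset,
          ((-1:ℝ)^(T.card - U.card) / ((T.card - S.card + 1 : ℕ):ℝ)) * ν U := by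
    refine Finset.sum_congr rfl fun T hT => ?_
    rw [Finset.sum_div]
    exact Finset.sum_congr rfl fun U hU => by ring
  rw [step1]
  rw [Finset.sum_comm'
    (s := Finset.univ.powerset.filter (fun T : Finset ι => S ⊆ T))
    (t := fun T => T.powerset)
    (t' := (Finset.univ : Finset ι).powerset)
    (s' := fun U => Finset.univ.powerset.filter (fun T : Finset ι => S ∪ U ⊆ T))
    (by
      intro T U
      simp only [Finset.mem_filter, Finset.mem_powerset, Finset.union_subset_iff]
      constructor
      · rintro ⟨⟨hTu, hST⟩, hUT⟩
        exact ⟨⟨hTu, hST, hUT⟩, hUT.trans hTu⟩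
      · rintro ⟨⟨hTu, hST, hUT⟩, _⟩
        exact ⟨⟨hTu, hST⟩, hUT⟩)]
  refine Finset.sum_congr rfl fun U hU => ?_
  rw [Finset.sum_mul]

/-- The coefficients of the two expansions agree. -/
lemma shapley_coeff_eq (S W : Finset ι) :
    (1 / (((Fintype.card ι - S.card + 1 : ℕ) : ℝ) *
        (((Fintype.card ι - S.card).choose (W \ S).card : ℕ) : ℝ))) *
      (-1 : ℝ) ^ (S.card - (W ∩ S).card)
    = (-1:ℝ)^((S ∪ W).card - W.card) *
      (((Fintype.card ι - (S ∪ W).card).factorial * ((S ∪ W).card - S.card).factorial : ℕ) /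
        (((Fintype.card ι - S.card + 1).factorial : ℕ) : ℝ)) := by
  set n := Fintype.card ι with hn
  set s := S.card with hsdef
  set a := (S ∪ W).card with hadef
  set r := (W \ S).card with hrdef
  have hsa : s ≤ a := Finset.card_le_card Finset.subset_union_left
  have han : a ≤ n := by simpa using Finset.card_le_card (Finset.subset_univ (S ∪ W))
  have har : a = s + r := by
    rw [hadef, hsdef, hrdef, ← Finset.union_sdiff_self_eq_union,
      Finset.card_union_of_disjoint Finset.disjoint_sdiff]
  have hiw : (W ∩ S).card = (S ∩ W).card := by rw [Finset.inter_comm]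
  have hci : (S ∪ W).card + (S ∩ W).card = S.card + W.card :=
    Finset.card_union_add_card_inter S W
  have hsign : a - W.card = s - (W ∩ S).card := by omega
  have hrn : r ≤ n - s := by omega
  rw [hsign, show a - s = r from by omega, show n - a = n - s - r from by omega]
  have hCC : (n-s).choose r * r.factorial * (n-s-r).factorial = (n-s).factorial :=
    Nat.choose_mul_factorial_mul_factorial hrn
  have hfac : (n-s+1).factorial
      = (n-s+1) * ((n-s).choose r * r.factorial * (n-s-r).factorial) := by
    rw [hCC]; exact Nat.factorial_succ _
  have hC0 : 0 < (n-s).choose r := Nat.choose_pos hrn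
  have h1 : ((n-s+1 : ℕ):ℝ) ≠ 0 := by positivity
  have h2 : (((n-s).choose r : ℕ):ℝ) ≠ 0 := by
    exact_mod_cast hC0.ne'
  have h3 : (((n-s+1).factorial : ℕ):ℝ) ≠ 0 := by positivity
  have key : (1:ℝ) / (((n-s+1 : ℕ):ℝ) * (((n-s).choose r : ℕ):ℝ))
      = (((n-s-r).factorial * r.factorial : ℕ) : ℝ) / (((n-s+1).factorial : ℕ):ℝ) := by
    rw [div_eq_div_iff (by positivity) (by positivity), one_mul]
    rw [show ((n-s+1).factorial : ℝ)
        = ((n-s+1 : ℕ):ℝ) * ((n-s).choose r) * r.factorial * (n-s-r).factorial from by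
      rw [hfac]; push_cast; ring]
    push_cast
    ring
  rw [key]
  ring

end Aux

/-- **Shapley interaction index from Möbius interactions.** For every coalition `S`,
`φ^{SII}(S) = Σ_{T : S ⊆ T ⊆ N} m(T) / (|T| - |S| + 1)`. -/
theorem shapleyInteractionIndex_eq_sum_mobius {ι : Type*} [Fintype ι] [DecidableEq ι]
    (ν : Finset ι → ℝ) (S : Finset ι) :
    shapleyInteractionIndex ν S =
      ∑ T ∈ Finset.univ.powerset.filter (fun T : Finset ι => S ⊆ T),
        mobiusInteraction ν T / ((T.card - S.card + 1 : ℕ) : ℝ) := by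
  rw [shapley_lhs_expand, shapley_rhs_expand]
  refine Finset.sum_congr rfl fun W hW => ?_
  have hs : S.card ≤ (S ∪ W).card := Finset.card_le_card Finset.subset_union_left
  have hu : W.card ≤ (S ∪ W).card := Finset.card_le_card Finset.subset_union_right
  rw [shapley_sum_superset_coeff (S ∪ W) S.card W.card hs hu]
  rw [← shapley_coeff_eq S W]
  ring
end

section
/- (Recovery of the prediction from non-trivial Möbius interactions) Let N be a finite set and let A_1, ..., A_K ⊆ N. For each j let E_j be a real vector space, let ν_j be a game on N with values in E_j that is A_j-invariant, and let L_j : E_j → ℝ be a linear map; let c ∈ ℝ, and define the real-valued game ν on N by ν(T) := c + Σ_{j=1}^{K} L_j(ν_j(T)). Then the grand-coalition value is recovered from the Möbius interactions supported on the union of powersets: ν(N) = Σ_{S ∈ ⋃_{j} P(A_j)} m(S), where P(A_j) denotes the collection of all subsets of A_j and the sum ranges over each such subset S exactly once. -/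
lemma sum_powerset_neg_one_pow_card_real {ι : Type*} [DecidableEq ι] (y : Finset ι) :
    (∑ U ∈ y.powerset, (-1 : ℝ) ^ U.card) = if y = ∅ then 1 else 0 := by
  have h := Finset.sum_powerset_neg_one_pow_card (x := y)
  have h2 : ((∑ U ∈ y.powerset, (-1 : ℤ) ^ U.card : ℤ) : ℝ)
      = ∑ U ∈ y.powerset, (-1 : ℝ) ^ U.card := by push_cast; ring
  rw [← h2, h]
  split <;> norm_num

/-- Möbius inversion: summing the interactions over all subsets of `N` recovers `f N`. -/
lemma mobius_inversion {ι : Type*} [DecidableEq ι] (f : Finset ι → ℝ) (N : Finset ι) :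
    ∑ S ∈ N.powerset, mobiusInteraction f S = f N := by
  classical
  unfold mobiusInteraction
  have step1 : ∀ S ∈ N.powerset,
      (∑ T ∈ S.powerset, ((-1 : ℝ) ^ (S.card - T.card)) * f T)
      = ∑ T ∈ N.powerset, if T ⊆ S then ((-1 : ℝ) ^ (S.card - T.card)) * f T else 0 := by
    intro S hS
    rw [← Finset.sum_filter]
    apply Finset.sum_congr _ (fun _ _ => rfl)
    ext T
    simp only [Finset.mem_powerset, Finset.mem_filter]
    exact ⟨fun h => ⟨h.trans (Finset.mem_powerset.1 hS), h⟩, fun h => h.2⟩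
  rw [Finset.sum_congr rfl step1, Finset.sum_comm]
  have step2 : ∀ T ∈ N.powerset,
      (∑ S ∈ N.powerset, if T ⊆ S then ((-1 : ℝ) ^ (S.card - T.card)) * f T else 0)
      = (if N \ T = ∅ then 1 else 0) * f T := by
    intro T hT
    have hTN : T ⊆ N := Finset.mem_powerset.1 hT
    rw [← Finset.sum_filter]
    have hbij : ∑ S ∈ N.powerset.filter (fun S => T ⊆ S),
        ((-1 : ℝ) ^ (S.card - T.card)) * f T
        = ∑ U ∈ (N \ T).powerset, ((-1 : ℝ) ^ U.card) * f T := by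
      apply Finset.sum_nbij' (i := fun S => S \ T) (j := fun U => U ∪ T)
      · intro S hS
        simp only [Finset.mem_filter, Finset.mem_powerset] at hS ⊢
        exact Finset.sdiff_subset_sdiff hS.1 le_rfl
      · intro U hU
        simp only [Finset.mem_filter, Finset.mem_powerset] at hU ⊢
        constructor
        · exact Finset.union_subset (hU.trans (Finset.sdiff_subset)) hTN
        · exact Finset.subset_union_right
      · intro S hS
        simp only [Finset.mem_filter, Finset.mem_powerset] at hS
        exact Finset.sdiff_union_of_subset hS.2
      · intro U hU
        simp only [Finset.mem_powerset] at hU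
        have hd : Disjoint U T := Finset.disjoint_of_subset_left hU Finset.sdiff_disjoint
        rw [Finset.union_sdiff_cancel_right hd]
      · intro S hS
        simp only [Finset.mem_filter, Finset.mem_powerset] at hS
        rw [Finset.card_sdiff_of_subset hS.2]
    rw [hbij, ← Finset.sum_mul, sum_powerset_neg_one_pow_card_real]
  rw [Finset.sum_congr rfl step2]
  have : ∀ T ∈ N.powerset,
      (if N \ T = ∅ then 1 else 0) * f T = if T = N then f T else 0 := by
    intro T hT
    have hTN : T ⊆ N := Finset.mem_powerset.1 hT
    by_cases h : T = N
    · subst h; simp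
    · have : N \ T ≠ ∅ := fun hc =>
        h (Finset.Subset.antisymm hTN (Finset.sdiff_eq_empty_iff_subset.1 hc))
      simp [this, h]
  rw [Finset.sum_congr rfl this, Finset.sum_ite_eq' N.powerset N f,
    if_pos (Finset.mem_powerset.2 (Finset.Subset.refl N))]

/-- If `g` is `A`-invariant and `i ∈ S` with `i ∉ A`, the alternating sum vanishes. -/
lemma mobius_vanish {ι : Type*} [DecidableEq ι] (g : Finset ι → ℝ) (A S : Finset ι)
    (i : ι) (hiS : i ∈ S) (hiA : i ∉ A) (hg : ∀ T, g T = g (T ∩ A)) :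
    ∑ T ∈ S.powerset, ((-1 : ℝ) ^ (S.card - T.card)) * g T = 0 := by
  classical
  set S' := S.erase i with hS'
  have hiS' : i ∉ S' := Finset.notMem_erase i S
  have hins : S = insert i S' := (Finset.insert_erase hiS).symm
  have hcard : S.card = S'.card + 1 := by
    rw [hins, Finset.card_insert_of_notMem hiS']
  rw [hins, Finset.sum_powerset_insert hiS', ← hins]
  rw [← Finset.sum_add_distrib]
  apply Finset.sum_eq_zero
  intro T hT
  have hTS' : T ⊆ S' := Finset.mem_powerset.1 hT
  have hiT : i ∉ T := fun h => hiS' (hTS' h)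
  have hcT : (insert i T).card = T.card + 1 := Finset.card_insert_of_notMem hiT
  have hgins : g (insert i T) = g T := by
    rw [hg (insert i T), hg T]
    congr 1
    rw [Finset.insert_inter_of_notMem hiA]
  have hTle : T.card ≤ S'.card := Finset.card_le_card hTS'
  have h1 : S.card - T.card = (S'.card - T.card) + 1 := by omega
  have h2 : S.card - (insert i T).card = S'.card - T.card := by omega
  rw [hgins, hcT] at *
  rw [h1, h2]
  ring

/-- **Recovery of the prediction from non-trivial Möbius interactions.** Let
`ν(T) := c + Σ_j L_j(ν_j(T))`, where each game `ν_j` (with values in a real vector space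
`E j`) is `A j`-invariant and each `L j : E j → ℝ` is linear. Then the grand-coalition
value is recovered from the Möbius interactions supported on the union of powersets:
`ν(N) = Σ_{S ∈ ⋃_j P(A j)} m(S)`, each such subset counted exactly once. -/
theorem recovery_from_nontrivial_mobius {ι : Type*} [Fintype ι] [DecidableEq ι]
    (K : ℕ) (hK : 0 < K) (A : Fin K → Finset ι)
    (E : Fin K → Type*) [∀ j, AddCommGroup (E j)] [∀ j, Module ℝ (E j)]
    (ν : ∀ j, Finset ι → E j)
    (hinv : ∀ (j : Fin K) (T : Finset ι), ν j T = ν j (T ∩ A j))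
    (L : ∀ j, E j →ₗ[ℝ] ℝ) (c : ℝ) :
    c + ∑ j : Fin K, L j (ν j Finset.univ) =
      ∑ S ∈ Finset.univ.biUnion (fun j : Fin K => (A j).powerset),
        mobiusInteraction (fun T => c + ∑ j : Fin K, L j (ν j T)) S := by
  classical
  set f : Finset ι → ℝ := fun T => c + ∑ j : Fin K, L j (ν j T) with hf
  have hmain := mobius_inversion f Finset.univ
  rw [show c + ∑ j : Fin K, L j (ν j Finset.univ) = f Finset.univ from rfl, ← hmain]
  symm
  apply Finset.sum_subset
  · intro S hS
    simp only [Finset.mem_biUnion, Finset.mem_powerset] at hS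
    obtain ⟨j, _, hj⟩ := hS
    exact Finset.mem_powerset.2 (hj.trans (Finset.subset_univ _))
  · intro S _ hS
    simp only [Finset.mem_biUnion, Finset.mem_powerset, Finset.mem_univ, true_and,
      not_exists] at hS
    -- S is not contained in any A j; in particular S is nonempty
    have hSne : S.Nonempty := by
      rcases Finset.eq_empty_or_nonempty S with h | h
      · exact absurd (h ▸ Finset.empty_subset (A ⟨0, hK⟩)) (hS ⟨0, hK⟩)
      · exact h
    obtain ⟨i0, hi0⟩ := hSne
    unfold mobiusInteraction
    have expand : ∀ T ∈ S.powerset,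
        ((-1 : ℝ) ^ (S.card - T.card)) * f T
        = ((-1 : ℝ) ^ (S.card - T.card)) * c
          + ∑ j : Fin K, ((-1 : ℝ) ^ (S.card - T.card)) * L j (ν j T) := by
      intro T _
      rw [hf]
      rw [mul_add, Finset.mul_sum]
    rw [Finset.sum_congr rfl expand, Finset.sum_add_distrib]
    have hc : ∑ T ∈ S.powerset, ((-1 : ℝ) ^ (S.card - T.card)) * c = 0 := by
      apply mobius_vanish (fun _ => c) ∅ S i0 hi0 (Finset.notMem_empty i0)
      intro T; rfl
    have hsum : ∑ T ∈ S.powerset, ∑ j : Fin K,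
        ((-1 : ℝ) ^ (S.card - T.card)) * L j (ν j T) = 0 := by
      rw [Finset.sum_comm]
      apply Finset.sum_eq_zero
      intro j _
      have hnot : ¬ S ⊆ A j := hS j
      obtain ⟨i, hiS, hiA⟩ := Finset.not_subset.1 hnot
      apply mobius_vanish (fun T => L j (ν j T)) (A j) S i hiS hiA
      intro T
      exact congrArg (L j) (hinv j T)
    rw [hc, hsum, add_zero]
end
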